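/- arXiv:1408.0253 — 2 statements merged into one kernel-verified Lean document; each statement's English description precedes it below -/
import Mathlib

section
/- In SU(n), the conjugacy class of exp(ζ*), where ζ* = diag((n−1)/(2n), (n−3)/(2n), …, (1−n)/(2n))·2πi in the Lie algebra (i.e., the unitary matrix with eigenvalues the n distinct n-th roots of (−1)^{n+1}), is invariant under multiplication by every element of the centre Z(SU(n)); moreover it is the unique conjugacy class of SU(n) with this property. -/
/-!
A central element of SU(n) commutes with every unitary matrix (rescale it into SU(n)), in
particular with sign-diagonal and permutation matrices, so it is a scalar `ω` with `ω ^ n = 1`.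
If every `n`-th root of `c ≠ 0` is an eigenvalue of `M`, then `χ_M = X ^ n - c`, and `M` is
diagonalizable with these distinct eigenvalues; two such matrices are similar, and two similar
matrices of SU(n) are conjugate in SU(n): the polar decomposition `S = W √(S⋆S)` of a
similarity turns it into a unitary one `W`, which a scalar rescales to determinant `1`.
Hence the class of `A` is `{B | χ_B = X ^ n - (-1) ^ (n + 1)}`, which is stable under
`B ↦ ω B`. Conversely, if the class of `A'` is stable, its spectrum is stable under
multiplication by `n`-th roots of unity, so `χ_{A'} = X ^ n - μ ^ n` for an eigenvalue `μ`,
and `det A' = 1` forces `μ ^ n = (-1) ^ (n + 1)`.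
-/

open Matrix Polynomial

namespace Matrix

section General

variable {ι : Type*} [Fintype ι] [DecidableEq ι]

theorem charpoly_eq_of_isConj {R : Type*} [CommRing R] {M N : Matrix ι ι R} (h : IsConj M N) :
    M.charpoly = N.charpoly := by
  obtain ⟨P, hP⟩ := h
  rw [(Units.eq_mul_inv_iff_mul_eq P).2 hP.eq.symm, coe_units_inv, charpoly_units_conj]

theorem isConj_diagonal_of_injective {K : Type*} [Field K] {M : Matrix ι ι K} {d : ι → K}
    (hd : Function.Injective d) (h : ∀ i, d i ∈ spectrum K M) : IsConj (diagonal d) M := by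
  have hev (i : ι) : Module.End.HasEigenvalue (toLin' M) (d i) :=
    .of_mem_spectrum (by rw [spectrum_toLin']; exact h i)
  choose v hv using fun i => (hev i).exists_hasEigenvector
  have hP : IsUnit (of fun a i => v i a) := linearIndependent_cols_iff_isUnit.1
    (Module.End.eigenvectors_linearIndependent' _ d hd v hv)
  refine ⟨hP.unit, ?_⟩
  ext a i
  rw [IsUnit.unit_spec, mul_diagonal]
  have := congrFun (hv i).apply_eq_smul a
  simpa [mul_apply, toLin'_apply, mulVec, dotProduct, mul_comm] using this.symm

theorem apply_eq_zero_of_commute_diagonal {R : Type*} [CommRing R] [NoZeroDivisors R]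
    {M : Matrix ι ι R} {d : ι → R} (h : Commute (diagonal d) M) {i j : ι} (hij : d i ≠ d j) :
    M i j = 0 := by
  have hij' := congrFun₂ h.eq i j
  rw [diagonal_mul, mul_diagonal] at hij'
  exact (mul_eq_zero.1 (by linear_combination hij' : (d i - d j) * M i j = 0)).resolve_left
    (sub_ne_zero.2 hij)

theorem apply_apply_of_commute_permMatrix {R : Type*} [CommRing R] {M : Matrix ι ι R}
    {σ : Equiv.Perm ι} (h : Commute (σ.permMatrix R) M) (i j : ι) : M (σ i) (σ j) = M i j := by
  have hij := congrFun₂ h.eq i (σ j)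
  simpa [PEquiv.toMatrix_toPEquiv_mul, PEquiv.mul_toMatrix_toPEquiv] using hij

theorem permMatrix_mem_unitaryGroup {R : Type*} [CommRing R] [StarRing R] (σ : Equiv.Perm ι) :
    σ.permMatrix R ∈ unitaryGroup ι R := by
  rw [mem_unitaryGroup_iff', star_eq_conjTranspose, conjTranspose_permMatrix, ← permMatrix_mul,
    mul_inv_cancel, permMatrix_one]

open scoped MatrixOrder in
theorem exists_mem_unitaryGroup_mul_eq_mul_of_isConj {M N : Matrix ι ι ℂ}
    (hM : M ∈ unitaryGroup ι ℂ) (hN : N ∈ unitaryGroup ι ℂ) (h : IsConj M N) :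
    ∃ W ∈ unitaryGroup ι ℂ, W * M = N * W := by
  obtain ⟨⟨S, S', hSS', hS'S⟩, h⟩ := h
  replace h : S * M = N * S := h
  have hS : IsUnit S := ⟨⟨S, S', hSS', hS'S⟩, rfl⟩
  have hSN : star S * N = M * star S := by
    have h' : star M * star S = star S * star N := by simpa using congrArg star h
    calc star S * N = M * (star M * star S) * N := by
          rw [← mul_assoc, Unitary.mul_star_self_of_mem hM, one_mul]
      _ = M * star S := by
          rw [h', mul_assoc, mul_assoc, Unitary.star_mul_self_of_mem hN, mul_one]
  have hTM : Commute (star S * S) M := by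
    calc star S * S * M = star S * N * S := by rw [mul_assoc, h, ← mul_assoc]
      _ = M * (star S * S) := by rw [hSN, mul_assoc]
  -- Polar decomposition `S = W P` with `P = √(S⋆S)`; `P` commutes with `M` because `S⋆S` does.
  have hPM : Commute (CFC.sqrt (star S * S)) M := by
    rw [CFC.sqrt_eq_cfc]; exact hTM.cfc_nnreal _
  have hPP : CFC.sqrt (star S * S) * CFC.sqrt (star S * S) = star S * S :=
    CFC.sqrt_mul_sqrt_self _ (star_mul_self_nonneg S)
  have hPsa : IsSelfAdjoint (CFC.sqrt (star S * S)) := (CFC.sqrt_nonneg _).isSelfAdjoint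
  set P := CFC.sqrt (star S * S)
  have hP : IsUnit P := isUnit_of_mul_isUnit_left (hPP ▸ hS.star.mul hS)
  have hPinvM : Commute (Ring.inverse P) M := by
    rw [← hP.unit_spec, Ring.inverse_unit]
    exact Commute.units_inv_left (by rwa [hP.unit_spec])
  refine ⟨S * Ring.inverse P, ?_, ?_⟩
  · rw [mem_unitaryGroup_iff', star_mul, hPsa.ringInverse.star_eq]
    calc Ring.inverse P * star S * (S * Ring.inverse P)
        = Ring.inverse P * (P * P) * Ring.inverse P := by rw [hPP]; simp only [mul_assoc]
      _ = 1 := by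
          rw [← mul_assoc, Ring.inverse_mul_cancel _ hP, one_mul, Ring.mul_inverse_cancel _ hP]
  · rw [mul_assoc, hPinvM.eq, ← mul_assoc, h, mul_assoc]

end General

theorem _root_.Complex.mem_unitary_of_norm_eq_one {z : ℂ} (hz : ‖z‖ = 1) : z ∈ unitary ℂ := by
  rw [Unitary.mem_iff_star_mul_self, Complex.star_def, Complex.conj_mul', hz]
  norm_num

theorem _root_.Complex.exists_injective_pow_eq {n : ℕ} (hn : n ≠ 0) {c : ℂ} (hc : c ≠ 0) :
    ∃ d : Fin n → ℂ, Function.Injective d ∧ ∀ i, d i ^ n = c := by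
  obtain ⟨α, hα⟩ := IsAlgClosed.exists_pow_nat_eq c (Nat.pos_of_ne_zero hn)
  have hζ := Complex.isPrimitiveRoot_exp n hn
  refine ⟨fun i => Complex.exp (2 * Real.pi * Complex.I / n) ^ (i : ℕ) * α, ?_, fun i => ?_⟩
  · have hα0 : α ≠ 0 := by rintro rfl; exact hc (by rw [← hα, zero_pow hn])
    exact fun i j hij => Fin.ext (hζ.injOn_pow_mul hα0 (by simp) (by simp) hij)
  · rw [mul_pow, ← pow_mul, mul_comm (i : ℕ) n, pow_mul, hζ.pow_eq_one, one_pow, one_mul, hα]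

section SpecialUnitary

variable {n : ℕ}

theorem charpoly_eq_X_pow_sub_C_iff {M : Matrix (Fin n) (Fin n) ℂ} {c : ℂ} (hn : n ≠ 0)
    (hc : c ≠ 0) : M.charpoly = X ^ n - C c ↔ ∀ z : ℂ, z ^ n = c → z ∈ spectrum ℂ M := by
  refine ⟨fun h z hz => ?_, fun h => ?_⟩
  · rw [mem_spectrum_iff_isRoot_charpoly, h]
    simp [hz]
  have hq : (X ^ n - C c).Monic := monic_X_pow_sub_C c hn
  have hroots : (X ^ n - C c).roots ≤ M.charpoly.roots := by
    refine (Multiset.le_iff_subset ((Complex.isPrimitiveRoot_exp n hn).nthRoots_nodup hc)).2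
      fun z hz => ?_
    rw [mem_roots M.charpoly_monic.ne_zero, ← mem_spectrum_iff_isRoot_charpoly]
    exact h z ((mem_nthRoots (Nat.pos_of_ne_zero hn)).1 hz)
  refine eq_of_monic_of_dvd_of_natDegree_le hq M.charpoly_monic ?_ ?_
  · rw [← prod_multiset_X_sub_C_of_monic_of_roots_card_eq hq
      (splits_iff_card_roots.1 (IsAlgClosed.splits _))]
    exact (Multiset.prod_X_sub_C_dvd_iff_le_roots M.charpoly_monic.ne_zero _).2 hroots
  · rw [M.charpoly_natDegree_eq_dim, natDegree_X_pow_sub_C, Fintype.card_fin]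

theorem det_eq_of_charpoly_eq_X_pow_sub_C {M : Matrix (Fin n) (Fin n) ℂ} {c : ℂ} (hn : n ≠ 0)
    (h : M.charpoly = X ^ n - C c) : M.det = (-1) ^ (n + 1) * c := by
  rw [det_eq_sign_charpoly_coeff, h, Fintype.card_fin]
  simp [coeff_X_pow, Ne.symm hn, pow_succ]

theorem isConj_of_charpoly_eq_X_pow_sub_C {M N : Matrix (Fin n) (Fin n) ℂ} {c : ℂ} (hn : n ≠ 0)
    (hc : c ≠ 0) (hM : M.charpoly = X ^ n - C c) (hN : N.charpoly = X ^ n - C c) :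
    IsConj M N := by
  obtain ⟨d, hd, hdc⟩ := Complex.exists_injective_pow_eq hn hc
  have hdiag {B : Matrix (Fin n) (Fin n) ℂ} (hB : B.charpoly = X ^ n - C c) :
      IsConj (diagonal d) B :=
    isConj_diagonal_of_injective hd fun i => (charpoly_eq_X_pow_sub_C_iff hn hc).1 hB _ (hdc i)
  exact (hdiag hM).symm.trans (hdiag hN)

theorem charpoly_smul_eq_X_pow_sub_C {M : Matrix (Fin n) (Fin n) ℂ} {c ω : ℂ} (hn : n ≠ 0)
    (hc : c ≠ 0) (hω : ω ^ n = 1) (h : M.charpoly = X ^ n - C c) :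
    (ω • M).charpoly = X ^ n - C c := by
  have hω0 : ω ≠ 0 := by rintro rfl; simp [hn] at hω
  rw [charpoly_eq_X_pow_sub_C_iff hn hc] at h ⊢
  intro z hz
  have := spectrum.smul_mem_smul_iff (r := Units.mk0 ω hω0) (s := ω⁻¹ * z) |>.2
    (h _ (by rw [mul_pow, inv_pow, hω, inv_one, one_mul, hz]))
  simpa only [Units.smul_def, Units.val_mk0, smul_eq_mul, mul_inv_cancel_left₀ hω0] using this

theorem charpoly_smul_eq_X_pow_sub_C_iff {M : Matrix (Fin n) (Fin n) ℂ} {c ω : ℂ} (hn : n ≠ 0)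
    (hc : c ≠ 0) (hω : ω ^ n = 1) :
    (ω • M).charpoly = X ^ n - C c ↔ M.charpoly = X ^ n - C c := by
  refine ⟨fun h => ?_, charpoly_smul_eq_X_pow_sub_C hn hc hω⟩
  have hω0 : ω ≠ 0 := by rintro rfl; simp [hn] at hω
  have := charpoly_smul_eq_X_pow_sub_C hn hc (ω := ω⁻¹) (by rw [inv_pow, hω, inv_one]) h
  rwa [inv_smul_smul₀ hω0] at this

theorem charpoly_eq_X_pow_sub_C_of_charpoly_smul_eq {M : Matrix (Fin n) (Fin n) ℂ} (hn : n ≠ 0)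
    (hM : IsUnit M) (h : ∀ ω : ℂ, ω ^ n = 1 → (ω • M).charpoly = M.charpoly) :
    M.charpoly = X ^ n - C ((-1) ^ (n + 1) * M.det) := by
  obtain ⟨μ, hμ⟩ := IsAlgClosed.exists_root M.charpoly (by
    rw [degree_eq_natDegree M.charpoly_monic.ne_zero, M.charpoly_natDegree_eq_dim,
      Fintype.card_fin]
    exact_mod_cast hn)
  have hμ0 : μ ≠ 0 := by
    rintro rfl
    exact (spectrum.zero_mem_iff ℂ).1 (mem_spectrum_iff_isRoot_charpoly.2 hμ) hM
  have hcharpoly : M.charpoly = X ^ n - C (μ ^ n) := by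
    refine (charpoly_eq_X_pow_sub_C_iff hn (pow_ne_zero n hμ0)).2 fun z hz => ?_
    -- `z = ω μ` with `ω = z / μ` an `n`-th root of unity, and `σ (ω • M) = σ M`.
    have hω : (z / μ) ^ n = 1 := by rw [div_pow, hz, div_self (pow_ne_zero n hμ0)]
    have hω0 : z / μ ≠ 0 := by intro h0; simp [h0, hn] at hω
    have := spectrum.smul_mem_smul_iff (r := Units.mk0 _ hω0) (a := M) |>.2
      (mem_spectrum_iff_isRoot_charpoly.2 hμ)
    simp only [Units.smul_def, Units.val_mk0, smul_eq_mul, div_mul_cancel₀ z hμ0] at this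
    rwa [mem_spectrum_iff_isRoot_charpoly, h _ hω, ← mem_spectrum_iff_isRoot_charpoly] at this
  rw [hcharpoly, det_eq_of_charpoly_eq_X_pow_sub_C hn hcharpoly, ← mul_assoc, ← pow_add,
    Even.neg_one_pow ⟨n + 1, rfl⟩, one_mul]

theorem smul_mem_specialUnitaryGroup {U : Matrix (Fin n) (Fin n) ℂ} {θ : ℂ} (hn : n ≠ 0)
    (hU : U ∈ unitaryGroup (Fin n) ℂ) (hθ : θ ^ n * U.det = 1) :
    θ • U ∈ specialUnitaryGroup (Fin n) ℂ := by
  have hnorm : ‖θ‖ = 1 := by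
    have := congrArg norm hθ
    rwa [norm_mul, norm_pow, CStarRing.norm_of_mem_unitary (E := ℂ) (det_of_mem_unitary hU),
      mul_one, norm_one, pow_eq_one_iff_of_nonneg (norm_nonneg θ) hn] at this
  rw [mem_specialUnitaryGroup_iff, det_smul, Fintype.card_fin]
  exact ⟨Unitary.smul_mem_of_mem (A := Matrix (Fin n) (Fin n) ℂ)
    (Complex.mem_unitary_of_norm_eq_one hnorm) hU, hθ⟩

theorem exists_smul_mem_specialUnitaryGroup {U : Matrix (Fin n) (Fin n) ℂ} (hn : n ≠ 0)
    (hU : U ∈ unitaryGroup (Fin n) ℂ) :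
    ∃ θ : ℂ, θ ≠ 0 ∧ θ • U ∈ specialUnitaryGroup (Fin n) ℂ := by
  have hdet : U.det ≠ 0 := (isUnit_det_of_left_inverse (Unitary.star_mul_self_of_mem hU)).ne_zero
  obtain ⟨θ, hθ⟩ := IsAlgClosed.exists_pow_nat_eq U.det⁻¹ (Nat.pos_of_ne_zero hn)
  refine ⟨θ, ?_, smul_mem_specialUnitaryGroup hn hU (by rw [hθ, inv_mul_cancel₀ hdet])⟩
  rintro rfl
  exact inv_ne_zero hdet (by rw [← hθ, zero_pow hn])

theorem isConj_iff_isConj_coe_specialUnitaryGroup (hn : n ≠ 0)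
    {A B : specialUnitaryGroup (Fin n) ℂ} :
    IsConj A B ↔ IsConj (A : Matrix (Fin n) (Fin n) ℂ) B := by
  refine ⟨(specialUnitaryGroup (Fin n) ℂ).subtype.map_isConj, fun h => ?_⟩
  obtain ⟨W, hW, hWAB⟩ := exists_mem_unitaryGroup_mul_eq_mul_of_isConj
    (mem_specialUnitaryGroup_iff.1 A.2).1 (mem_specialUnitaryGroup_iff.1 B.2).1 h
  obtain ⟨θ, -, hθW⟩ := exists_smul_mem_specialUnitaryGroup hn hW
  refine ⟨toUnits ⟨θ • W, hθW⟩, Subtype.ext ?_⟩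
  change θ • W * A = B * (θ • W)
  rw [smul_mul_assoc, mul_smul_comm, hWAB]

theorem commute_of_mem_center_specialUnitaryGroup (hn : n ≠ 0)
    {z : specialUnitaryGroup (Fin n) ℂ} (hz : z ∈ Submonoid.center (specialUnitaryGroup (Fin n) ℂ))
    {U : Matrix (Fin n) (Fin n) ℂ} (hU : U ∈ unitaryGroup (Fin n) ℂ) :
    Commute U z := by
  obtain ⟨θ, hθ0, hθU⟩ := exists_smul_mem_specialUnitaryGroup hn hU
  have hcomm : θ • U * z = z * (θ • U) :=
    congrArg Subtype.val (Submonoid.mem_center_iff.1 hz ⟨_, hθU⟩)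
  rw [smul_mul_assoc, mul_smul_comm] at hcomm
  exact smul_right_injective _ hθ0 hcomm

theorem exists_eq_smul_one_of_mem_center_specialUnitaryGroup (hn : n ≠ 0)
    {z : specialUnitaryGroup (Fin n) ℂ}
    (hz : z ∈ Submonoid.center (specialUnitaryGroup (Fin n) ℂ)) :
    ∃ ω : ℂ, ω ^ n = 1 ∧ (z : Matrix (Fin n) (Fin n) ℂ) = ω • 1 := by
  have hoff {i j : Fin n} (hij : i ≠ j) : (z : Matrix (Fin n) (Fin n) ℂ) i j = 0 := by
    refine apply_eq_zero_of_commute_diagonal (d := fun k => if k = i then -1 else 1)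
      (commute_of_mem_center_specialUnitaryGroup hn hz ?_) (by norm_num [Ne.symm hij])
    rw [mem_unitaryGroup_iff', star_eq_conjTranspose, diagonal_conjTranspose,
      diagonal_mul_diagonal, ← diagonal_one]
    congr 1
    ext k
    by_cases hk : k = i <;> simp [hk]
  have hdiag (i j : Fin n) :
      (z : Matrix (Fin n) (Fin n) ℂ) i i = (z : Matrix (Fin n) (Fin n) ℂ) j j := by
    simpa using (apply_apply_of_commute_permMatrix (commute_of_mem_center_specialUnitaryGroup hn
      hz (permMatrix_mem_unitaryGroup (Equiv.swap i j))) i i).symm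
  have hscalar : (z : Matrix (Fin n) (Fin n) ℂ) =
      (z : Matrix (Fin n) (Fin n) ℂ) ⟨0, Nat.pos_of_ne_zero hn⟩ ⟨0, Nat.pos_of_ne_zero hn⟩ • 1 := by
    ext i j
    rcases eq_or_ne i j with rfl | hij
    · simpa using hdiag i _
    · simp [hoff hij, hij]
  refine ⟨_, ?_, hscalar⟩
  have hdet := (mem_specialUnitaryGroup_iff.1 z.2).2
  rwa [hscalar, det_smul, det_one, mul_one, Fintype.card_fin] at hdet

theorem smul_one_mem_specialUnitaryGroup {ω : ℂ} (hn : n ≠ 0) (hω : ω ^ n = 1) :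
    ω • (1 : Matrix (Fin n) (Fin n) ℂ) ∈ specialUnitaryGroup (Fin n) ℂ :=
  smul_mem_specialUnitaryGroup hn (one_mem _) (by rw [det_one, mul_one, hω])

theorem smul_one_mem_center_specialUnitaryGroup {ω : ℂ} (hn : n ≠ 0) (hω : ω ^ n = 1) :
    (⟨ω • 1, smul_one_mem_specialUnitaryGroup hn hω⟩ : specialUnitaryGroup (Fin n) ℂ) ∈
      Submonoid.center (specialUnitaryGroup (Fin n) ℂ) :=
  Submonoid.mem_center_iff.2 fun g => Subtype.ext (by simp)

end SpecialUnitary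

end Matrix

theorem stmt_10 (n : ℕ) (hn : 0 < n)
    (A : Matrix.specialUnitaryGroup (Fin n) ℂ)
    (hA : ∀ z : ℂ, z ^ n = (-1 : ℂ) ^ (n + 1) →
      z ∈ spectrum ℂ (A : Matrix (Fin n) (Fin n) ℂ)) :
    (∀ z ∈ Submonoid.center (Matrix.specialUnitaryGroup (Fin n) ℂ),
      ∀ B : Matrix.specialUnitaryGroup (Fin n) ℂ, IsConj A B ↔ IsConj A (z * B)) ∧
    (∀ A' : Matrix.specialUnitaryGroup (Fin n) ℂ,
      (∀ z ∈ Submonoid.center (Matrix.specialUnitaryGroup (Fin n) ℂ),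
        ∀ B : Matrix.specialUnitaryGroup (Fin n) ℂ, IsConj A' B ↔ IsConj A' (z * B)) →
      IsConj A A') := by
  have hn0 : n ≠ 0 := hn.ne'
  have hc : (-1 : ℂ) ^ (n + 1) ≠ 0 := pow_ne_zero _ (neg_ne_zero.2 one_ne_zero)
  have hAchar := (charpoly_eq_X_pow_sub_C_iff hn0 hc).2 hA
  have hconj (B : specialUnitaryGroup (Fin n) ℂ) :
      IsConj A B ↔ (B : Matrix (Fin n) (Fin n) ℂ).charpoly = X ^ n - C ((-1) ^ (n + 1)) := by
    rw [isConj_iff_isConj_coe_specialUnitaryGroup hn0]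
    exact ⟨fun h => charpoly_eq_of_isConj h ▸ hAchar,
      isConj_of_charpoly_eq_X_pow_sub_C hn0 hc hAchar⟩
  refine ⟨fun z hz B => ?_, fun A' hA' => ?_⟩
  · obtain ⟨ω, hω, hzω⟩ := exists_eq_smul_one_of_mem_center_specialUnitaryGroup hn0 hz
    rw [hconj, hconj, Submonoid.coe_mul, hzω, smul_one_mul,
      charpoly_smul_eq_X_pow_sub_C_iff hn0 hc hω]
  · have hdet : (A' : Matrix (Fin n) (Fin n) ℂ).det = 1 := (mem_specialUnitaryGroup_iff.1 A'.2).2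
    have hsmul (ω : ℂ) (hω : ω ^ n = 1) : (ω • (A' : Matrix (Fin n) (Fin n) ℂ)).charpoly =
        (A' : Matrix (Fin n) (Fin n) ℂ).charpoly := by
      have h := (specialUnitaryGroup (Fin n) ℂ).subtype.map_isConj
        ((hA' _ (smul_one_mem_center_specialUnitaryGroup hn0 hω) A').1 (.refl A'))
      rw [map_mul, Submonoid.coe_subtype, smul_one_mul] at h
      exact (charpoly_eq_of_isConj h).symm
    rw [hconj, charpoly_eq_X_pow_sub_C_of_charpoly_smul_eq hn0
      ((isUnit_iff_isUnit_det _).2 (hdet ▸ isUnit_one)) hsmul, hdet, mul_one]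
end

section
/- Let A ∈ SU(n) have eigenvalues equal to the n distinct n-th roots of (−1)^{n+1}, and let k be a positive integer. Then A^k is a scalar matrix (i.e., A^k ∈ Z(SU(n))) if and only if n divides k. -/
/-! The polynomial `X ^ n - C c`, with `c = (-1) ^ (n + 1)`, is monic, separable and of degree `n`,
and all of its roots are eigenvalues of `A`; hence it is the characteristic polynomial of `A`, and
Cayley–Hamilton gives `A ^ n = c • 1`, so `n ∣ k` makes `A ^ k` scalar. Conversely, if
`A ^ k = d • 1` then `z ^ k = d` for every eigenvalue `z`; applied to a root `w` of `X ^ n - C c`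
and to `ζ w` with `ζ` a primitive `n`-th root of unity, this gives `ζ ^ k = 1`, i.e. `n ∣ k`. -/

open Polynomial

theorem Polynomial.Separable.dvd_of_forall_isRoot {K : Type*} [Field K] {p q : K[X]}
    (hsep : p.Separable) (hsplit : p.Splits) (hq : q ≠ 0) (h : ∀ z, p.IsRoot z → q.IsRoot z) :
    p ∣ q := by
  refine hsplit.dvd_of_roots_le_roots hsep.ne_zero ?_
  rw [Multiset.le_iff_subset (nodup_roots hsep)]
  intro z hz
  exact (mem_roots hq).2 (h z (isRoot_of_mem_roots hz))

theorem Matrix.charpoly_eq_of_forall_mem_spectrum {ι K : Type*} [Fintype ι] [DecidableEq ι]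
    [Field K] (M : Matrix ι ι K) {p : K[X]} (hmonic : p.Monic) (hsep : p.Separable)
    (hsplit : p.Splits) (hdeg : p.natDegree = Fintype.card ι)
    (h : ∀ z, p.IsRoot z → z ∈ spectrum K M) : M.charpoly = p :=
  eq_of_monic_of_dvd_of_natDegree_le hmonic M.charpoly_monic
    (hsep.dvd_of_forall_isRoot hsplit M.charpoly_monic.ne_zero
      fun z hz => Matrix.mem_spectrum_iff_isRoot_charpoly.1 (h z hz))
    (by rw [M.charpoly_natDegree_eq_dim, hdeg])

theorem Matrix.pow_card_eq_of_charpoly_eq_X_pow_sub_C {ι R : Type*} [Fintype ι] [DecidableEq ι]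
    [CommRing R] (M : Matrix ι ι R) {c : R} (h : M.charpoly = X ^ Fintype.card ι - C c) :
    M ^ Fintype.card ι = algebraMap R (Matrix ι ι R) c := by
  have := M.aeval_self_charpoly
  rwa [h, map_sub, aeval_X_pow, aeval_C, sub_eq_zero] at this

theorem spectrum.pow_eq_of_pow_eq_algebraMap {K A : Type*} [Field K] [Ring A] [Algebra K A]
    {a : A} {k : ℕ} {d z : K} (ha : a ^ k = algebraMap K A d) (hz : z ∈ spectrum K a) :
    z ^ k = d := by
  rcases subsingleton_or_nontrivial A with _ | _
  · simp [spectrum.of_subsingleton] at hz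
  simpa [ha, spectrum.scalar_eq] using spectrum.pow_mem_pow a k hz

theorem IsPrimitiveRoot.dvd_of_forall_pow_eq {M : Type*} [CommMonoidWithZero M]
    [IsCancelMulZero M] {ζ w : M} {n k : ℕ} (hζ : IsPrimitiveRoot ζ n) (hw : w ≠ 0)
    (h : ∀ z, z ^ n = w ^ n → z ^ k = w ^ k) : n ∣ k := by
  have hζw : (ζ * w) ^ k = w ^ k := h _ (by rw [mul_pow, hζ.pow_eq_one, one_mul])
  rw [mul_pow] at hζw
  exact hζ.dvd_of_pow_eq_one k
    (mul_right_cancel₀ (pow_ne_zero k hw) (hζw.trans (one_mul _).symm))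

theorem stmt_11_general (n k : ℕ) (hn : 0 < n)
    (A : Matrix.specialUnitaryGroup (Fin n) ℂ)
    (hA : ∀ z : ℂ, z ^ n = (-1 : ℂ) ^ (n + 1) →
      z ∈ spectrum ℂ (A : Matrix (Fin n) (Fin n) ℂ)) :
    (∃ c : ℂ, (A : Matrix (Fin n) (Fin n) ℂ) ^ k = c • (1 : Matrix (Fin n) (Fin n) ℂ)) ↔
      n ∣ k := by
  set c : ℂ := (-1 : ℂ) ^ (n + 1)
  have hc : c ≠ 0 := pow_ne_zero _ (by norm_num)
  have hchar : (A : Matrix (Fin n) (Fin n) ℂ).charpoly = X ^ n - C c :=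
    Matrix.charpoly_eq_of_forall_mem_spectrum _ (monic_X_pow_sub_C c hn.ne')
      (separable_X_pow_sub_C c (by exact_mod_cast hn.ne') hc) (IsAlgClosed.splits _)
      (by rw [natDegree_X_pow_sub_C, Fintype.card_fin])
      fun z hz => hA z (by simpa [sub_eq_zero] using hz)
  simp_rw [← Algebra.algebraMap_eq_smul_one]
  constructor
  · rintro ⟨d, hd⟩
    obtain ⟨w, hw⟩ := IsAlgClosed.exists_pow_nat_eq c hn
    have hpow : ∀ z, z ^ n = c → z ^ k = d := fun z hz =>
      spectrum.pow_eq_of_pow_eq_algebraMap hd (hA z hz)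
    refine (Complex.isPrimitiveRoot_exp n hn.ne').dvd_of_forall_pow_eq
      (ne_zero_pow hn.ne' (hw ▸ hc)) fun z hz => ?_
    rw [hpow z (hz.trans hw), hpow w hw]
  · rintro ⟨m, rfl⟩
    have hAn := Matrix.pow_card_eq_of_charpoly_eq_X_pow_sub_C _ (by rwa [Fintype.card_fin])
    rw [Fintype.card_fin] at hAn
    exact ⟨c ^ m, by rw [pow_mul, hAn, ← map_pow]⟩

theorem stmt_11 (n k : ℕ) (hn : 0 < n) (hk : 0 < k)
    (A : Matrix.specialUnitaryGroup (Fin n) ℂ)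
    (hA : ∀ z : ℂ, z ^ n = (-1 : ℂ) ^ (n + 1) →
      z ∈ spectrum ℂ (A : Matrix (Fin n) (Fin n) ℂ)) :
    (∃ c : ℂ, (A : Matrix (Fin n) (Fin n) ℂ) ^ k = c • (1 : Matrix (Fin n) (Fin n) ℂ)) ↔
      n ∣ k :=
  stmt_11_general n k hn A hA
end
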